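/- Let f : [0,∞) × [0,1] → ℝ be continuous with continuous partial derivative ∂f/∂t. Suppose u₁ and u₂ both map [0,∞) × [0,1] to ℝ, have continuous partial derivatives ∂u/∂t and ∂²u/∂t², satisfy ∂²u/∂t²(t,x) − 3 ∫₀¹ x s ∂²u/∂t²(t,s) ds = ∂u/∂t(t,x) + f(t,x) for all t ≥ 0 and x ∈ [0,1], and satisfy the conditions u(0,x) = 0 and ∂u/∂t(0,x) − 3x ∫₀¹ s ∂u/∂t(0,s) ds = 0 for all x ∈ [0,1]. Then u₁ = u₂. -/

import Mathlib

/-!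
Write `w = ∂ₜu₁ - ∂ₜu₂`. Subtracting the two equations eliminates `f` and gives
`∂ₜw(t,x) = w(t,x) + x c(t)` for some `c`, while the initial conditions make `w(0,·)` a multiple
of `x`. Hence `w(t,x) - x w(t,1)` solves `v' = v` with `v(0) = 0` and vanishes: `w(t,·)` stays a
multiple of `x`. On the other hand `w(t,·) = (I - P) ∂ₜw(t,·)`, and `P` preserves the moment
`∫₀¹ s g(s) ds`, so `∫₀¹ s w(t,s) ds = 0`; for a multiple of `x` this forces `w = 0`, and then
`u₁ = u₂`.
-/

open Set

section ODE

variable {E : Type*} [NormedAddCommGroup E] [NormedSpace ℝ E] {a : ℝ}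

theorem eq_zero_of_hasDerivWithinAt_Ici_self {v : ℝ → E}
    (hv : ∀ t ∈ Ici a, HasDerivWithinAt v (v t) (Ici a) t) (ha : v a = 0) :
    ∀ t ∈ Ici a, v t = 0 := by
  intro T hT
  have hcont : ContinuousOn v (Icc a T) := fun t ht =>
    (hv t ht.1).continuousWithinAt.mono Icc_subset_Ici_self
  refine ODE_solution_unique_of_mem_Icc_right (v := fun _ => id) (s := fun _ => univ) (K := 1)
    (fun _ _ => LipschitzWith.id.lipschitzOnWith) hcont
    (fun t ht => (hv t ht.1).mono (Ici_subset_Ici.2 ht.1)) (fun _ _ => mem_univ _)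
    continuousOn_const (fun _ _ => hasDerivWithinAt_const _ _ _) (fun _ _ => mem_univ _) ha
    ⟨hT, le_rfl⟩

theorem eq_of_hasDerivWithinAt_Ici_eq {f g f' : ℝ → E}
    (hf : ∀ t ∈ Ici a, HasDerivWithinAt f (f' t) (Ici a) t)
    (hg : ∀ t ∈ Ici a, HasDerivWithinAt g (f' t) (Ici a) t) (ha : f a = g a) :
    ∀ t ∈ Ici a, f t = g t := by
  intro T hT
  refine eq_of_has_deriv_right_eq (fun t ht => (hf t ht.1).mono (Ici_subset_Ici.2 ht.1))
    (fun t ht => (hg t ht.1).mono (Ici_subset_Ici.2 ht.1))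
    (fun t ht => (hf t ht.1).continuousWithinAt.mono Icc_subset_Ici_self)
    (fun t ht => (hg t ht.1).continuousWithinAt.mono Icc_subset_Ici_self) ha T ⟨hT, le_rfl⟩

end ODE

noncomputable def firstMoment (g : ℝ → ℝ) : ℝ := ∫ s in (0:ℝ)..1, s * g s

theorem intervalIntegrable_id_mul {g : ℝ → ℝ} (hg : ContinuousOn g (Icc 0 1)) :
    IntervalIntegrable (fun s => s * g s) MeasureTheory.volume 0 1 :=
  (continuousOn_id.mul hg).intervalIntegrable_of_Icc zero_le_one

theorem firstMoment_sub {g₁ g₂ : ℝ → ℝ} (hg₁ : ContinuousOn g₁ (Icc 0 1))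
    (hg₂ : ContinuousOn g₂ (Icc 0 1)) :
    firstMoment (g₁ - g₂) = firstMoment g₁ - firstMoment g₂ := by
  simp only [firstMoment, Pi.sub_apply, mul_sub]
  exact intervalIntegral.integral_sub (intervalIntegrable_id_mul hg₁)
    (intervalIntegrable_id_mul hg₂)

theorem firstMoment_id_mul_const (k : ℝ) : firstMoment (fun s => s * k) = k / 3 := by
  simp only [firstMoment, ← mul_assoc, ← pow_two, intervalIntegral.integral_mul_const,
    integral_pow]
  norm_num
  ring

/-- `x * (3 * firstMoment g)` is the paper's `(P g)(x)`, and `P` preserves `firstMoment` because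
`firstMoment (fun s => 3 * s) = 1`. -/
theorem firstMoment_eq_zero_of_eqOn_sub_proj {g h : ℝ → ℝ} (hg : ContinuousOn g (Icc 0 1))
    (hh : EqOn h (fun x => g x - x * (3 * firstMoment g)) (Icc 0 1)) : firstMoment h = 0 := by
  have hproj : ContinuousOn (fun x => x * (3 * firstMoment g)) (Icc 0 1) := by fun_prop
  calc firstMoment h = firstMoment (g - fun x => x * (3 * firstMoment g)) :=
        intervalIntegral.integral_congr fun s hs => by
          rw [uIcc_of_le zero_le_one] at hs
          simp only [hh hs, Pi.sub_apply]
    _ = 0 := by rw [firstMoment_sub hg hproj, firstMoment_id_mul_const]; ring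

theorem eq_zero_of_hasDerivWithinAt_add_mul_of_firstMoment_eq_zero {w : ℝ → ℝ → ℝ} {c : ℝ → ℝ}
    (hw : ∀ x ∈ Icc (0:ℝ) 1, ∀ t ∈ Ici (0:ℝ),
      HasDerivWithinAt (fun τ => w τ x) (w t x + x * c t) (Ici 0) t)
    (h0 : ∀ x ∈ Icc (0:ℝ) 1, w 0 x = x * w 0 1)
    (hm : ∀ t ∈ Ici (0:ℝ), firstMoment (w t) = 0) :
    ∀ t ∈ Ici (0:ℝ), ∀ x ∈ Icc (0:ℝ) 1, w t x = 0 := by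
  have h1 : (1:ℝ) ∈ Icc 0 1 := right_mem_Icc.2 zero_le_one
  have hlin : ∀ x ∈ Icc (0:ℝ) 1, ∀ t ∈ Ici (0:ℝ), w t x = x * w t 1 := by
    intro x hx
    have := eq_zero_of_hasDerivWithinAt_Ici_self (v := fun t => w t x - x * w t 1)
      (fun t ht => ((hw x hx t ht).sub ((hw 1 h1 t ht).const_mul x)).congr_deriv (by ring))
      (sub_eq_zero.2 (h0 x hx))
    exact fun t ht => sub_eq_zero.1 (this t ht)
  intro t ht x hx
  have hw1 : w t 1 = 0 := by
    have hmt : firstMoment (fun s => s * w t 1) = 0 := by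
      rw [← hm t ht]
      exact intervalIntegral.integral_congr fun s hs => by
        rw [uIcc_of_le zero_le_one] at hs
        simp only [← hlin s hs t ht]
    rw [firstMoment_id_mul_const] at hmt
    linarith
  rw [hlin x hx t ht, hw1, mul_zero]

theorem stmt_11_general (f u₁ ut₁ utt₁ u₂ ut₂ utt₂ : ℝ → ℝ → ℝ)
    (hut₁ : ∀ x ∈ Set.Icc (0:ℝ) 1, ∀ t ∈ Set.Ici (0:ℝ),
      HasDerivWithinAt (fun τ => u₁ τ x) (ut₁ t x) (Set.Ici 0) t)
    (hutt₁ : ∀ x ∈ Set.Icc (0:ℝ) 1, ∀ t ∈ Set.Ici (0:ℝ),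
      HasDerivWithinAt (fun τ => ut₁ τ x) (utt₁ t x) (Set.Ici 0) t)
    (huttc₁ : ContinuousOn (fun p : ℝ × ℝ => utt₁ p.1 p.2) (Set.Ici 0 ×ˢ Set.Icc 0 1))
    (heq₁ : ∀ t ∈ Set.Ici (0:ℝ), ∀ x ∈ Set.Icc (0:ℝ) 1,
      utt₁ t x - 3 * x * ∫ s in (0:ℝ)..1, s * utt₁ t s = ut₁ t x + f t x)
    (hzero₁ : ∀ x ∈ Set.Icc (0:ℝ) 1, u₁ 0 x = 0)
    (hinit₁ : ∀ x ∈ Set.Icc (0:ℝ) 1,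
      ut₁ 0 x - 3 * x * ∫ s in (0:ℝ)..1, s * ut₁ 0 s = 0)
    (hut₂ : ∀ x ∈ Set.Icc (0:ℝ) 1, ∀ t ∈ Set.Ici (0:ℝ),
      HasDerivWithinAt (fun τ => u₂ τ x) (ut₂ t x) (Set.Ici 0) t)
    (hutt₂ : ∀ x ∈ Set.Icc (0:ℝ) 1, ∀ t ∈ Set.Ici (0:ℝ),
      HasDerivWithinAt (fun τ => ut₂ τ x) (utt₂ t x) (Set.Ici 0) t)
    (huttc₂ : ContinuousOn (fun p : ℝ × ℝ => utt₂ p.1 p.2) (Set.Ici 0 ×ˢ Set.Icc 0 1))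
    (heq₂ : ∀ t ∈ Set.Ici (0:ℝ), ∀ x ∈ Set.Icc (0:ℝ) 1,
      utt₂ t x - 3 * x * ∫ s in (0:ℝ)..1, s * utt₂ t s = ut₂ t x + f t x)
    (hzero₂ : ∀ x ∈ Set.Icc (0:ℝ) 1, u₂ 0 x = 0)
    (hinit₂ : ∀ x ∈ Set.Icc (0:ℝ) 1,
      ut₂ 0 x - 3 * x * ∫ s in (0:ℝ)..1, s * ut₂ 0 s = 0) :
    ∀ t ∈ Set.Ici (0:ℝ), ∀ x ∈ Set.Icc (0:ℝ) 1, u₁ t x = u₂ t x := by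
  have h1 : (1:ℝ) ∈ Icc 0 1 := right_mem_Icc.2 zero_le_one
  have hw : ∀ t ∈ Ici (0:ℝ), ∀ x ∈ Icc (0:ℝ) 1, ut₁ t x - ut₂ t x = 0 := by
    refine eq_zero_of_hasDerivWithinAt_add_mul_of_firstMoment_eq_zero
      (w := fun t x => ut₁ t x - ut₂ t x)
      (c := fun t => 3 * (firstMoment (utt₁ t) - firstMoment (utt₂ t))) ?_ ?_ ?_
    · intro x hx t ht
      exact ((hutt₁ x hx t ht).sub (hutt₂ x hx t ht)).congr_deriv
        (by unfold firstMoment; linear_combination heq₁ t ht x hx - heq₂ t ht x hx)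
    · intro x hx
      linear_combination hinit₁ x hx - hinit₂ x hx - x * (hinit₁ 1 h1 - hinit₂ 1 h1)
    · intro t ht
      have hc₁ := huttc₁.uncurry_left t ht
      have hc₂ := huttc₂.uncurry_left t ht
      refine firstMoment_eq_zero_of_eqOn_sub_proj (hc₁.sub hc₂) fun x hx => ?_
      rw [firstMoment_sub hc₁ hc₂]
      simp only [Pi.sub_apply, firstMoment]
      linear_combination heq₂ t ht x hx - heq₁ t ht x hx
  intro t ht x hx
  refine eq_of_hasDerivWithinAt_Ici_eq (g := fun τ => u₂ τ x) (hut₁ x hx) (fun τ hτ => ?_)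
    ((hzero₁ x hx).trans (hzero₂ x hx).symm) t ht
  rw [sub_eq_zero.1 (hw τ hτ x hx)]
  exact hut₂ x hx τ hτ

/-- Uniqueness in Example 3: two solutions of
`∂²u/∂t²(t,x) − 3 ∫₀¹ x s ∂²u/∂t²(t,s) ds = ∂u/∂t(t,x) + f(t,x)` on `[0,∞) × [0,1]`
satisfying the special initial conditions `u(0,x) = 0` and
`∂u/∂t(0,x) − 3x ∫₀¹ s ∂u/∂t(0,s) ds = 0` must coincide. -/
theorem stmt_11 (f ft u₁ ut₁ utt₁ u₂ ut₂ utt₂ : ℝ → ℝ → ℝ)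
    (hf : ContinuousOn (fun p : ℝ × ℝ => f p.1 p.2) (Set.Ici 0 ×ˢ Set.Icc 0 1))
    (hft : ∀ x ∈ Set.Icc (0:ℝ) 1, ∀ t ∈ Set.Ici (0:ℝ),
      HasDerivWithinAt (fun τ => f τ x) (ft t x) (Set.Ici 0) t)
    (hftc : ContinuousOn (fun p : ℝ × ℝ => ft p.1 p.2) (Set.Ici 0 ×ˢ Set.Icc 0 1))
    (hut₁ : ∀ x ∈ Set.Icc (0:ℝ) 1, ∀ t ∈ Set.Ici (0:ℝ),
      HasDerivWithinAt (fun τ => u₁ τ x) (ut₁ t x) (Set.Ici 0) t)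
    (hutt₁ : ∀ x ∈ Set.Icc (0:ℝ) 1, ∀ t ∈ Set.Ici (0:ℝ),
      HasDerivWithinAt (fun τ => ut₁ τ x) (utt₁ t x) (Set.Ici 0) t)
    (hutc₁ : ContinuousOn (fun p : ℝ × ℝ => ut₁ p.1 p.2) (Set.Ici 0 ×ˢ Set.Icc 0 1))
    (huttc₁ : ContinuousOn (fun p : ℝ × ℝ => utt₁ p.1 p.2) (Set.Ici 0 ×ˢ Set.Icc 0 1))
    (heq₁ : ∀ t ∈ Set.Ici (0:ℝ), ∀ x ∈ Set.Icc (0:ℝ) 1,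
      utt₁ t x - 3 * x * ∫ s in (0:ℝ)..1, s * utt₁ t s = ut₁ t x + f t x)
    (hzero₁ : ∀ x ∈ Set.Icc (0:ℝ) 1, u₁ 0 x = 0)
    (hinit₁ : ∀ x ∈ Set.Icc (0:ℝ) 1,
      ut₁ 0 x - 3 * x * ∫ s in (0:ℝ)..1, s * ut₁ 0 s = 0)
    (hut₂ : ∀ x ∈ Set.Icc (0:ℝ) 1, ∀ t ∈ Set.Ici (0:ℝ),
      HasDerivWithinAt (fun τ => u₂ τ x) (ut₂ t x) (Set.Ici 0) t)
    (hutt₂ : ∀ x ∈ Set.Icc (0:ℝ) 1, ∀ t ∈ Set.Ici (0:ℝ),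
      HasDerivWithinAt (fun τ => ut₂ τ x) (utt₂ t x) (Set.Ici 0) t)
    (hutc₂ : ContinuousOn (fun p : ℝ × ℝ => ut₂ p.1 p.2) (Set.Ici 0 ×ˢ Set.Icc 0 1))
    (huttc₂ : ContinuousOn (fun p : ℝ × ℝ => utt₂ p.1 p.2) (Set.Ici 0 ×ˢ Set.Icc 0 1))
    (heq₂ : ∀ t ∈ Set.Ici (0:ℝ), ∀ x ∈ Set.Icc (0:ℝ) 1,
      utt₂ t x - 3 * x * ∫ s in (0:ℝ)..1, s * utt₂ t s = ut₂ t x + f t x)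
    (hzero₂ : ∀ x ∈ Set.Icc (0:ℝ) 1, u₂ 0 x = 0)
    (hinit₂ : ∀ x ∈ Set.Icc (0:ℝ) 1,
      ut₂ 0 x - 3 * x * ∫ s in (0:ℝ)..1, s * ut₂ 0 s = 0) :
    ∀ t ∈ Set.Ici (0:ℝ), ∀ x ∈ Set.Icc (0:ℝ) 1, u₁ t x = u₂ t x :=
  stmt_11_general f u₁ ut₁ utt₁ u₂ ut₂ utt₂ hut₁ hutt₁ huttc₁ heq₁ hzero₁ hinit₁ hut₂ hutt₂ huttc₂
    heq₂ hzero₂ hinit₂
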